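/- Let n₁, n₂, m₁, m₂ be positive integers with n₂ ≤ n₁. Then G₂(n₁, m₁) + H₂(n₂, m₂) + n₁ + n₂ ≤ H₂(n₁ + n₂, m₁ + m₂), where G₂(n, m) = n·(d₂ − 1 + c₂·log₂ m), H₂(n, m) = n·(d₂ + c₂·log₂(m − 1)) for m ≥ 2 and H₂(n, 1) = 0, with c₂ = 3/log₂(27/4) and d₂ = 6 − c₂·(3·log₂ 3 − 1). -/

import Mathlib

/-!
Write `a = m₁` and `b = m₂ - 1`. When `m₂ = 1` the claim reduces to `1 ≤ d₂ + c₂ log m₁`,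
which holds since `d₂ ≥ 1`. Otherwise, after cancelling the `d₂` terms, it reads
`n₂ ≤ c₂ (n₁ (log(a+b) - log a) + n₂ (log(a+b) - log b))`; since `n₂ ≤ n₁` and
`log a ≤ log(a+b)`, the right side is at least `c₂ n₂ (2 log(a+b) - log a - log b)`, which is
`≥ 2 c₂ n₂ ≥ n₂` by AM–GM, `4ab ≤ (a+b)²`, and `2 c₂ ≥ 1`.
-/

open Real

/-- The constant `c₂ = 3 / log₂(27/4)`. -/
noncomputable def c2 : ℝ := 3 / logb 2 (27 / 4)

/-- The constant `d₂ = 6 − c₂·(3·log₂ 3 − 1)`. -/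
noncomputable def d2 : ℝ := 6 - c2 * (3 * logb 2 3 - 1)

/-- `G₂(n, m) = n·(d₂ − 1 + c₂·log₂ m)`. -/
noncomputable def G2 (n m : ℕ) : ℝ := (n : ℝ) * (d2 - 1 + c2 * logb 2 m)

/-- `H₂(n, m) = n·(d₂ + c₂·log₂(m−1))` for `m ≥ 2`, and `H₂(n, 1) = 0`. -/
noncomputable def H2 (n m : ℕ) : ℝ :=
  if m = 1 then 0 else (n : ℝ) * (d2 + c2 * logb 2 ((m : ℝ) - 1))

lemma seven_div_six_le_logb_two_three : (7 : ℝ) / 6 ≤ logb 2 3 := by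
  have h : logb 2 ((2 : ℝ) ^ 7) ≤ logb 2 ((3 : ℝ) ^ 6) :=
    logb_le_logb_of_le (by norm_num) (by positivity) (by norm_num)
  rw [logb_pow, logb_pow, logb_self_eq_one (by norm_num)] at h
  push_cast at h
  linarith

lemma logb_two_three_le_two : logb 2 (3 : ℝ) ≤ 2 := by
  have h : logb 2 (3 : ℝ) ≤ logb 2 ((2 : ℝ) ^ 2) :=
    logb_le_logb_of_le (by norm_num) (by norm_num) (by norm_num)
  rwa [logb_pow, logb_self_eq_one (by norm_num), mul_one] at h

lemma logb_two_twentySeven_div_four : logb 2 (27 / 4 : ℝ) = 3 * logb 2 3 - 2 := by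
  rw [logb_div (by norm_num) (by norm_num), show (27 : ℝ) = 3 ^ 3 by norm_num,
    show (4 : ℝ) = 2 ^ 2 by norm_num, logb_pow, logb_pow, logb_self_eq_one (by norm_num)]
  ring

lemma c2_eq : c2 = 3 / (3 * logb 2 3 - 2) := by
  rw [c2, logb_two_twentySeven_div_four]

lemma c2_pos : 0 < c2 := by
  have h3 := seven_div_six_le_logb_two_three
  rw [c2_eq]
  exact div_pos (by norm_num) (by linarith)

lemma one_le_two_mul_c2 : 1 ≤ 2 * c2 := by
  have h3 := seven_div_six_le_logb_two_three
  have h3' := logb_two_three_le_two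
  rw [c2_eq, mul_div_assoc', le_div_iff₀ (by linarith)]
  linarith

lemma one_le_d2 : 1 ≤ d2 := by
  have h3 := seven_div_six_le_logb_two_three
  have hpos : 0 < 3 * logb 2 3 - 2 := by linarith
  have hc : 3 / (3 * logb 2 3 - 2) * (3 * logb 2 3 - 1) ≤ 5 := by
    rw [div_mul_eq_mul_div, div_le_iff₀ hpos]
    linarith
  rw [d2, c2_eq]
  linarith

lemma two_add_logb_two_mul_le {a b : ℝ} (ha : 0 < a) (hb : 0 < b) :
    2 + logb 2 (a * b) ≤ 2 * logb 2 (a + b) := by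
  have hamgm : 4 * (a * b) ≤ (a + b) ^ 2 := by nlinarith [sq_nonneg (a - b)]
  calc 2 + logb 2 (a * b) = logb 2 (2 ^ 2 * (a * b)) := by
        rw [logb_mul (x := 2 ^ 2) (by norm_num) (by positivity), logb_pow,
          logb_self_eq_one (by norm_num)]
        ring
    _ ≤ logb 2 ((a + b) ^ 2) :=
        logb_le_logb_of_le (by norm_num) (by positivity) (by norm_num [hamgm])
    _ = 2 * logb 2 (a + b) := by rw [logb_pow]; norm_num

lemma mul_logb_two_add_mul_logb_two_le {x y a b : ℝ} (hy : 0 ≤ y) (hyx : y ≤ x)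
    (ha : 0 < a) (hb : 0 < b) :
    x * logb 2 a + y * logb 2 b + 2 * y ≤ (x + y) * logb 2 (a + b) := by
  have hmono : logb 2 a ≤ logb 2 (a + b) := logb_le_logb_of_le (by norm_num) ha (by linarith)
  have hamgm := two_add_logb_two_mul_le ha hb
  rw [logb_mul ha.ne' hb.ne'] at hamgm
  nlinarith [mul_le_mul_of_nonneg_left hamgm hy,
    mul_le_mul_of_nonneg_right hyx (sub_nonneg.2 hmono)]

lemma G2_add_self (n m : ℕ) : G2 n m + n = n * (d2 + c2 * logb 2 m) := by
  rw [G2]; ring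

lemma H2_of_ne_one (n : ℕ) {m : ℕ} (hm : m ≠ 1) :
    H2 n m = n * (d2 + c2 * logb 2 ((m : ℝ) - 1)) :=
  if_neg hm

lemma G2_add_H2_one_le (n₁ n₂ : ℕ) {m : ℕ} (hm : 0 < m) :
    G2 n₁ m + H2 n₂ 1 + n₁ + n₂ ≤ H2 (n₁ + n₂) (m + 1) := by
  have hlog : 0 ≤ logb 2 (m : ℝ) := logb_nonneg (by norm_num) (by exact_mod_cast hm)
  have hd : 1 ≤ d2 + c2 * logb 2 m :=
    one_le_d2.trans (le_add_of_nonneg_right (mul_nonneg c2_pos.le hlog))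
  rw [H2_of_ne_one (n₁ + n₂) (m := m + 1) (by omega), H2, if_pos rfl, add_zero, add_assoc, ← add_assoc _ (n₁ : ℝ),
    G2_add_self]
  push_cast
  rw [add_sub_cancel_right]
  nlinarith [(Nat.cast_nonneg n₂ : (0 : ℝ) ≤ n₂)]

lemma G2_add_H2_le_of_two_le {n₁ n₂ m₁ m₂ : ℕ} (h : n₂ ≤ n₁) (hm₁ : 0 < m₁) (hm₂ : 2 ≤ m₂) :
    G2 n₁ m₁ + H2 n₂ m₂ + n₁ + n₂ ≤ H2 (n₁ + n₂) (m₁ + m₂) := by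
  have ha : (0 : ℝ) < m₁ := by exact_mod_cast hm₁
  have hb : (0 : ℝ) < (m₂ : ℝ) - 1 := by
    have : (2 : ℝ) ≤ m₂ := by exact_mod_cast hm₂
    linarith
  have hlog := mul_logb_two_add_mul_logb_two_le (Nat.cast_nonneg n₂)
    (Nat.cast_le.2 h : (n₂ : ℝ) ≤ n₁) ha hb
  rw [H2_of_ne_one _ (by omega), H2_of_ne_one _ (by omega), add_right_comm _ _ (n₁ : ℝ),
    G2_add_self, Nat.cast_add m₁, add_sub_assoc]
  push_cast
  nlinarith [mul_le_mul_of_nonneg_left hlog c2_pos.le, one_le_two_mul_c2, (Nat.cast_nonneg n₂ : (0 : ℝ) ≤ n₂)]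

theorem GH2_bound_a_general (n₁ n₂ m₁ m₂ : ℕ)
    (hm₁ : 0 < m₁) (hm₂ : 0 < m₂)
    (h : n₂ ≤ n₁) :
    G2 n₁ m₁ + H2 n₂ m₂ + n₁ + n₂ ≤ H2 (n₁ + n₂) (m₁ + m₂) := by
  obtain rfl | hm₂ : m₂ = 1 ∨ 2 ≤ m₂ := by omega
  · exact G2_add_H2_one_le n₁ n₂ hm₁
  · exact G2_add_H2_le_of_two_le h hm₁ hm₂

/-- Lemma 11(a): if `n₂ ≤ n₁` then
`G₂(n₁,m₁) + H₂(n₂,m₂) + n₁ + n₂ ≤ H₂(n₁+n₂, m₁+m₂)`. -/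
theorem GH2_bound_a (n₁ n₂ m₁ m₂ : ℕ)
    (hn₁ : 0 < n₁) (hn₂ : 0 < n₂) (hm₁ : 0 < m₁) (hm₂ : 0 < m₂)
    (h : n₂ ≤ n₁) :
    G2 n₁ m₁ + H2 n₂ m₂ + n₁ + n₂ ≤ H2 (n₁ + n₂) (m₁ + m₂) :=
  GH2_bound_a_general n₁ n₂ m₁ m₂ hm₁ hm₂ h
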